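/- Let p be a prime, T ≥ 3, u an integer with |u| ≤ T, h ≥ 1, ν ≥ 1, and write π for the prime counting function. Then ∑_{p ∈ [T,2T] prime} I_{p,ν}(u,h) ≤ (π(2T) − π(T))·K_ν(u,h) + ∑_{v₁,w₁,…,v_ν,w_ν=1}^{h} ω(|((v₁+u)⋯(v_ν+u)) − ((w₁+u)⋯(w_ν+u))|), where ω(m) is the number of distinct prime divisors of m (with ω(0)=ω(1)=0). -/

import Mathlib

open Finset

/-- The number of solutions of
`(x₁+u)⋯(x_ν+u) ≡ (y₁+u)⋯(y_ν+u) ≢ 0 (mod p)` with `1 ≤ x_j, y_j ≤ h`. -/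
noncomputable def Ipnu (p ν : ℕ) (u : ℤ) (h : ℕ) : ℕ :=
  Nat.card {t : (Fin ν → ℤ) × (Fin ν → ℤ) //
    (∀ j, t.1 j ∈ Finset.Icc 1 (h : ℤ) ∧ t.2 j ∈ Finset.Icc 1 (h : ℤ)) ∧
    (∏ j, ((t.1 j + u : ℤ) : ZMod p)) = (∏ j, ((t.2 j + u : ℤ) : ZMod p)) ∧
    (∏ j, ((t.1 j + u : ℤ) : ZMod p)) ≠ 0}

/-- The number of integer solutions of `(x₁+u)⋯(x_ν+u) = (y₁+u)⋯(y_ν+u)` with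
`1 ≤ x_j, y_j ≤ h`. -/
noncomputable def Knu (ν : ℕ) (u : ℤ) (h : ℕ) : ℕ :=
  Nat.card {t : (Fin ν → ℤ) × (Fin ν → ℤ) //
    (∀ j, t.1 j ∈ Finset.Icc 1 (h : ℤ) ∧ t.2 j ∈ Finset.Icc 1 (h : ℤ)) ∧
    (∏ j, (t.1 j + u)) = (∏ j, (t.2 j + u))}

/-- Averaging `I_{p,ν}(u,h)` over primes `p ∈ (T, 2T]`:
`∑_p I_{p,ν}(u,h) ≤ (π(2T) - π(T)) K_ν(u,h) + ∑_{v,w} ω(|∏(vⱼ+u) - ∏(wⱼ+u)|)`,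
where `ω(m)` is the number of distinct prime factors of `m` (`ω(0) = ω(1) = 0`). -/
theorem sum_Ipnu_over_primes (T h ν : ℕ) (u : ℤ) (hT : 3 ≤ T) (hu : |u| ≤ (T : ℤ))
    (hh : 1 ≤ h) (hν : 1 ≤ ν) :
    ∑ p ∈ (Finset.Ioc T (2 * T)).filter Nat.Prime, Ipnu p ν u h
      ≤ (Nat.primeCounting (2 * T) - Nat.primeCounting T) * Knu ν u h
        + ∑ v ∈ Fintype.piFinset (fun _ : Fin ν => Finset.Icc (1 : ℤ) h),
            ∑ w ∈ Fintype.piFinset (fun _ : Fin ν => Finset.Icc (1 : ℤ) h),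
              ((∏ j, (v j + u)) - ∏ j, (w j + u)).natAbs.primeFactors.card := by
  classical
  set A := Fintype.piFinset (fun _ : Fin ν => Finset.Icc (1 : ℤ) (h : ℤ)) with hA
  set S := A ×ˢ A with hSdef
  set P := (Finset.Ioc T (2 * T)).filter Nat.Prime with hPdef
  set diff : (Fin ν → ℤ) × (Fin ν → ℤ) → ℤ :=
    fun t => (∏ j, (t.1 j + u)) - (∏ j, (t.2 j + u)) with hdiff
  -- Knu as a finset card
  have hKnu : Knu ν u h = (S.filter (fun t => diff t = 0)).card := by
    rw [Knu]
    have e1 : Nat.card {t : (Fin ν → ℤ) × (Fin ν → ℤ) //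
        (∀ j, t.1 j ∈ Finset.Icc 1 (h : ℤ) ∧ t.2 j ∈ Finset.Icc 1 (h : ℤ)) ∧
        (∏ j, (t.1 j + u)) = (∏ j, (t.2 j + u))}
        = Nat.card {t // t ∈ S.filter (fun t => diff t = 0)} := by
      apply Nat.card_congr
      apply Equiv.subtypeEquivRight
      intro t
      simp [hSdef, hA, hdiff, Fintype.mem_piFinset, Finset.mem_product, forall_and,
        sub_eq_zero]
    rw [e1]; exact Nat.card_eq_finsetCard _
  -- Ipnu bound for each p
  have hIp : ∀ p ∈ P, Ipnu p ν u h ≤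
      Knu ν u h + (S.filter (fun t => (p : ℤ) ∣ diff t ∧ diff t ≠ 0)).card := by
    intro p _
    have e1 : Ipnu p ν u h = (S.filter (fun t =>
        (∏ j, ((t.1 j + u : ℤ) : ZMod p)) = (∏ j, ((t.2 j + u : ℤ) : ZMod p)) ∧
        (∏ j, ((t.1 j + u : ℤ) : ZMod p)) ≠ 0)).card := by
      rw [Ipnu]
      have e2 : Nat.card {t : (Fin ν → ℤ) × (Fin ν → ℤ) //
          (∀ j, t.1 j ∈ Finset.Icc 1 (h : ℤ) ∧ t.2 j ∈ Finset.Icc 1 (h : ℤ)) ∧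
          (∏ j, ((t.1 j + u : ℤ) : ZMod p)) = (∏ j, ((t.2 j + u : ℤ) : ZMod p)) ∧
          (∏ j, ((t.1 j + u : ℤ) : ZMod p)) ≠ 0}
          = Nat.card {t // t ∈ S.filter (fun t =>
            (∏ j, ((t.1 j + u : ℤ) : ZMod p)) = (∏ j, ((t.2 j + u : ℤ) : ZMod p)) ∧
            (∏ j, ((t.1 j + u : ℤ) : ZMod p)) ≠ 0)} := by
        apply Nat.card_congr
        apply Equiv.subtypeEquivRight
        intro t
        simp [hSdef, hA, Fintype.mem_piFinset, Finset.mem_product, forall_and, and_assoc]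
      rw [e2]; exact Nat.card_eq_finsetCard _
    rw [e1, hKnu]
    refine le_trans (Finset.card_le_card ?_) (Finset.card_union_le _ _)
    intro t ht
    simp only [Finset.mem_filter, Finset.mem_union] at ht ⊢
    obtain ⟨htS, hcong, -⟩ := ht
    have hdvd : (p : ℤ) ∣ diff t := by
      have : ((∏ j, (t.1 j + u) : ℤ) : ZMod p) = ((∏ j, (t.2 j + u) : ℤ) : ZMod p) := by
        push_cast
        exact_mod_cast hcong
      have h2 : ((diff t : ℤ) : ZMod p) = 0 := by
        simp [hdiff, sub_eq_zero, this]
      exact (ZMod.intCast_zmod_eq_zero_iff_dvd _ _).mp h2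
    by_cases h0 : diff t = 0
    · exact Or.inl ⟨htS, h0⟩
    · exact Or.inr ⟨htS, hdvd, h0⟩
  -- count of primes in (T, 2T]
  have hπ : P.card = Nat.primeCounting (2 * T) - Nat.primeCounting T := by
    have hcount : ∀ n : ℕ, Nat.primeCounting n = ((Finset.range (n + 1)).filter Nat.Prime).card := by
      intro n
      rw [Nat.primeCounting, Nat.primeCounting', Nat.count_eq_card_filter_range]
    have hsplit : (Finset.range (2 * T + 1)).filter Nat.Prime
        = ((Finset.range (T + 1)).filter Nat.Prime) ∪ P := by
      rw [hPdef, ← Finset.filter_union]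
      congr 1
      ext n
      simp only [Finset.mem_union, Finset.mem_range, Finset.mem_Ioc]
      omega
    have hdisj : Disjoint ((Finset.range (T + 1)).filter Nat.Prime) P := by
      rw [Finset.disjoint_left]
      intro n hn hn'
      simp only [hPdef, Finset.mem_filter, Finset.mem_range, Finset.mem_Ioc] at hn hn'
      omega
    rw [hcount, hcount, hsplit, Finset.card_union_of_disjoint hdisj]
    omega
  -- swap sums and bound by ω
  have hswap : ∑ p ∈ P, (S.filter (fun t => (p : ℤ) ∣ diff t ∧ diff t ≠ 0)).card
      ≤ ∑ t ∈ S, (diff t).natAbs.primeFactors.card := by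
    have e1 : ∑ p ∈ P, (S.filter (fun t => (p : ℤ) ∣ diff t ∧ diff t ≠ 0)).card
        = ∑ t ∈ S, (P.filter (fun p : ℕ => (p : ℤ) ∣ diff t ∧ diff t ≠ 0)).card :=
      calc ∑ p ∈ P, (S.filter (fun t => (p : ℤ) ∣ diff t ∧ diff t ≠ 0)).card
          = ∑ p ∈ P, ∑ t ∈ S, (if (p : ℤ) ∣ diff t ∧ diff t ≠ 0 then 1 else 0) :=
            Finset.sum_congr rfl (fun p _ => Finset.card_filter _ _)
        _ = ∑ t ∈ S, ∑ p ∈ P, (if (p : ℤ) ∣ diff t ∧ diff t ≠ 0 then 1 else 0) :=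
            Finset.sum_comm
        _ = ∑ t ∈ S, (P.filter (fun p : ℕ => (p : ℤ) ∣ diff t ∧ diff t ≠ 0)).card :=
            Finset.sum_congr rfl (fun t _ => (Finset.card_filter _ _).symm)
    rw [e1]
    apply Finset.sum_le_sum
    intro t _
    by_cases h0 : diff t = 0
    · simp [h0]
    · apply Finset.card_le_card
      intro p hp
      simp only [hPdef, Finset.mem_filter, Finset.mem_Ioc] at hp
      obtain ⟨⟨-, hpp⟩, hd, -⟩ := hp
      rw [Nat.mem_primeFactors]
      refine ⟨hpp, ?_, by simpa using h0⟩
      have := Int.natAbs_dvd_natAbs.mpr hd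
      simpa using this
  calc ∑ p ∈ P, Ipnu p ν u h
      ≤ ∑ p ∈ P, (Knu ν u h + (S.filter (fun t => (p : ℤ) ∣ diff t ∧ diff t ≠ 0)).card) :=
        Finset.sum_le_sum hIp
    _ = P.card * Knu ν u h
        + ∑ p ∈ P, (S.filter (fun t => (p : ℤ) ∣ diff t ∧ diff t ≠ 0)).card := by
        rw [Finset.sum_add_distrib, Finset.sum_const, smul_eq_mul]
    _ ≤ (Nat.primeCounting (2 * T) - Nat.primeCounting T) * Knu ν u h
        + ∑ t ∈ S, (diff t).natAbs.primeFactors.card := by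
        rw [hπ]
        exact Nat.add_le_add_left hswap _
    _ = _ := by
        congr 1
        rw [hSdef, ← Finset.sum_product']
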